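/- Let $s$ and $(\boldsymbol{l},\boldsymbol{m},\boldsymbol{j})$ satisfy $0\le j_t\le\min(l_t,m_t)$ for $t=s,s+1$, together with $j_s<l_s$ and $j_{s+1}<m_{s+1}$. Then $A_4\ne0$, and for each $t\in\{1,2,3\}$ the rational function $A_t/A_4\in\mathbb{Q}(q)$ is regular at $q=0$ and vanishes at $q=0$ (i.e. $A_t/A_4\in qA$, where $A$ is the subring of $\mathbb{Q}(q)$ of rational functions regular at $q=0$). -/

import Mathlib

/- Common setup: the quantum affine algebra U_q(A^{(1)}_{2n-1}) acting on symmetric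
tensor representations V_{l,x} and their duals, coideal operators b_i, tensor products,
and the K matrix, following Kusano-Okado. -/

noncomputable section
namespace AII

open scoped TensorProduct Classical
open Finset

/-- The base field F = ℚ(q). -/
abbrev F : Type := RatFunc ℚ

/-- The quantum parameter q. -/
def qq : F := RatFunc.X

/-- Quantum integer [a] = (q^a - q^{-a})/(q - q⁻¹). -/
def qint (a : ℤ) : F := (qq ^ a - qq ^ (-a)) / (qq - qq⁻¹)

/-- Quantum factorial [a]!. -/
def qfact (a : ℕ) : F := ∏ k ∈ Finset.range a, qint (k + 1)

/-- Quantum binomial coefficient. -/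
def qbinom (j p : ℕ) : F := qfact j / (qfact p * qfact (j - p))

instance (n : ℕ) [NeZero n] : NeZero (2 * n) := ⟨by have := NeZero.ne n; omega⟩

/-- Helper instance: zero of a tensor product (works around a stuck instance search). -/
noncomputable instance {R M N : Type*} [CommSemiring R] [AddCommMonoid M] [Module R M]
    [AddCommMonoid N] [Module R N] : Zero (TensorProduct R M N) :=
  (inferInstance : AddCommMonoid (TensorProduct R M N)).toZero

/-- Index set ℤ/2n for nodes of the Dynkin diagram / entries of weight vectors. -/
abbrev Zn (n : ℕ) := ZMod (2 * n)

/-- Membership in B_l : all entries nonnegative and summing to l. -/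
def inB (n : ℕ) [NeZero n] (l : ℕ) (α : Zn n → ℤ) : Prop :=
  (∀ i, 0 ≤ α i) ∧ (∑ i, α i) = (l : ℤ)

/-- The vector space V_{l} with basis indexed by B_l. -/
abbrev V (n : ℕ) [NeZero n] (l : ℕ) := {α : Zn n → ℤ // inB n l α} →₀ F

/-- Basis vector v_α, with the convention that it is 0 if α ∉ B_l
(in particular if α has a negative entry). -/
def vB (n : ℕ) [NeZero n] (l : ℕ) (α : Zn n → ℤ) : V n l :=
  if h : inB n l α then Finsupp.single ⟨α, h⟩ 1 else 0

/-- Helper: the linear operator sending v_α ↦ c(α) • v_{sh(α)}. -/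
def opOf (n : ℕ) [NeZero n] (l : ℕ) (c : (Zn n → ℤ) → F)
    (sh : (Zn n → ℤ) → (Zn n → ℤ)) : V n l →ₗ[F] V n l :=
  Finsupp.lsum F fun a => LinearMap.toSpanSingleton F (V n l) (c a.1 • vB n l (sh a.1))

/-- The i-th standard unit vector e_i of ℤ^{2n}. -/
def eu (n : ℕ) [NeZero n] (i : Zn n) : Zn n → ℤ := fun j => if j = i then 1 else 0

/-- Chevalley generator e_i on V_{l,x}. -/
def eOp (n : ℕ) [NeZero n] (l : ℕ) (x : F) (i : Zn n) : V n l →ₗ[F] V n l :=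
  opOf n l (fun α => (if i = 0 then x else 1) * qint (α (i + 1)))
    (fun α => α + eu n i - eu n (i + 1))

/-- Chevalley generator f_i on V_{l,x}. -/
def fOp (n : ℕ) [NeZero n] (l : ℕ) (x : F) (i : Zn n) : V n l →ₗ[F] V n l :=
  opOf n l (fun α => (if i = 0 then x⁻¹ else 1) * qint (α i))
    (fun α => α - eu n i + eu n (i + 1))

/-- Cartan generator k_i on V_{l,x}. -/
def kOp (n : ℕ) [NeZero n] (l : ℕ) (i : Zn n) : V n l →ₗ[F] V n l :=
  opOf n l (fun α => qq ^ (α i - α (i + 1))) id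

/-- Inverse Cartan generator k_i⁻¹ on V_{l,x}. -/
def kInvOp (n : ℕ) [NeZero n] (l : ℕ) (i : Zn n) : V n l →ₗ[F] V n l :=
  opOf n l (fun α => qq ^ (-(α i - α (i + 1)))) id

/-- e_i on the dual representation V^*_{l,x}. -/
def eSOp (n : ℕ) [NeZero n] (l : ℕ) (x : F) (i : Zn n) : V n l →ₗ[F] V n l :=
  opOf n l (fun α => (if i = 0 then x else 1) * qint (α i))
    (fun α => α - eu n i + eu n (i + 1))

/-- f_i on the dual representation V^*_{l,x}. -/
def fSOp (n : ℕ) [NeZero n] (l : ℕ) (x : F) (i : Zn n) : V n l →ₗ[F] V n l :=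
  opOf n l (fun α => (if i = 0 then x⁻¹ else 1) * qint (α (i + 1)))
    (fun α => α + eu n i - eu n (i + 1))

/-- k_i on the dual representation V^*_{l,x}. -/
def kSOp (n : ℕ) [NeZero n] (l : ℕ) (i : Zn n) : V n l →ₗ[F] V n l :=
  opOf n l (fun α => qq ^ (-(α i - α (i + 1)))) id

/-- k_i⁻¹ on the dual representation V^*_{l,x}. -/
def kSInvOp (n : ℕ) [NeZero n] (l : ℕ) (i : Zn n) : V n l →ₗ[F] V n l :=
  opOf n l (fun α => qq ^ (α i - α (i + 1))) id

/-- The coideal generator b_i built from families of operators e, f, k⁻¹: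
b_i = f_i + γ_i (e_{i+1}e_{i-1}e_i - q⁻¹(e_{i+1}e_ie_{i-1}+e_{i-1}e_ie_{i+1})
  + q⁻²e_ie_{i-1}e_{i+1}) k_i⁻¹. -/
def bOf (n : ℕ) [NeZero n] {M : Type*} [AddCommMonoid M] [Module F M]
    (e f kinv : Zn n → (M →ₗ[F] M)) (γ : Zn n → F) (i : Zn n) : M →ₗ[F] M :=
  f i + γ i • ((e (i + 1) ∘ₗ e (i - 1) ∘ₗ e i
      + (-qq⁻¹) • (e (i + 1) ∘ₗ e i ∘ₗ e (i - 1) + e (i - 1) ∘ₗ e i ∘ₗ e (i + 1))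
      + (qq ^ (-2 : ℤ)) • (e i ∘ₗ e (i - 1) ∘ₗ e (i + 1))) ∘ₗ kinv i)

/-- b_i on V_{l,x}. -/
def bOp (n : ℕ) [NeZero n] (l : ℕ) (x : F) (γ : Zn n → F) (i : Zn n) :
    V n l →ₗ[F] V n l :=
  bOf n (fun j => eOp n l x j) (fun j => fOp n l x j) (fun j => kInvOp n l j) γ i

/-- b_i on V^*_{l,x}. -/
def bSOp (n : ℕ) [NeZero n] (l : ℕ) (x : F) (γ : Zn n → F) (i : Zn n) :
    V n l →ₗ[F] V n l :=
  bOf n (fun j => eSOp n l x j) (fun j => fSOp n l x j) (fun j => kSInvOp n l j) γ i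

/-- Coproduct action of e: E = e ⊗ 1 + k ⊗ e. -/
def coE {M N : Type*} [AddCommGroup M] [Module F M] [AddCommGroup N] [Module F N]
    (e1 k1 : M →ₗ[F] M) (e2 : N →ₗ[F] N) : M ⊗[F] N →ₗ[F] M ⊗[F] N :=
  TensorProduct.map e1 LinearMap.id + TensorProduct.map k1 e2

/-- Coproduct action of f: F = f ⊗ k⁻¹ + 1 ⊗ f. -/
def coF {M N : Type*} [AddCommGroup M] [Module F M] [AddCommGroup N] [Module F N]
    (f1 : M →ₗ[F] M) (kinv2 f2 : N →ₗ[F] N) : M ⊗[F] N →ₗ[F] M ⊗[F] N :=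
  TensorProduct.map f1 kinv2 + TensorProduct.map LinearMap.id f2

/-- Coproduct action of k^{±1}: K = k ⊗ k. -/
def coK {M N : Type*} [AddCommGroup M] [Module F M] [AddCommGroup N] [Module F N]
    (k1 : M →ₗ[F] M) (k2 : N →ₗ[F] N) : M ⊗[F] N →ₗ[F] M ⊗[F] N :=
  TensorProduct.map k1 k2

/-- A bundle of operator families (e_i, f_i, k_i, k_i⁻¹) on a module. -/
structure Ops (n : ℕ) [NeZero n] (M : Type*) [AddCommGroup M] [Module F M] where
  e : Zn n → M →ₗ[F] M
  f : Zn n → M →ₗ[F] M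
  k : Zn n → M →ₗ[F] M
  kinv : Zn n → M →ₗ[F] M

/-- The operator bundle of V_{l,x}. -/
def VOps (n : ℕ) [NeZero n] (l : ℕ) (x : F) : Ops n (V n l) :=
  ⟨fun i => eOp n l x i, fun i => fOp n l x i, fun i => kOp n l i, fun i => kInvOp n l i⟩

/-- The operator bundle of V^*_{l,x}. -/
def VSOps (n : ℕ) [NeZero n] (l : ℕ) (x : F) : Ops n (V n l) :=
  ⟨fun i => eSOp n l x i, fun i => fSOp n l x i, fun i => kSOp n l i, fun i => kSInvOp n l i⟩

/-- Coproduct operator bundle on a tensor product of two representations. -/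
def tensorOps {n : ℕ} [NeZero n] {M N : Type*} [AddCommGroup M] [Module F M]
    [AddCommGroup N] [Module F N] (A : Ops n M) (B : Ops n N) : Ops n (M ⊗[F] N) where
  e := fun i => coE (A.e i) (A.k i) (B.e i)
  f := fun i => coF (A.f i) (B.kinv i) (B.f i)
  k := fun i => coK (A.k i) (B.k i)
  kinv := fun i => coK (A.kinv i) (B.kinv i)

/-- R intertwines the bundles A and B: R ∘ a = a ∘ R for all generators. -/
def Intertwines {n : ℕ} [NeZero n] {M N : Type*} [AddCommGroup M] [Module F M]
    [AddCommGroup N] [Module F N] (A : Ops n M) (B : Ops n N) (R : M →ₗ[F] N) : Prop :=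
  ∀ i : Zn n, R ∘ₗ A.e i = B.e i ∘ₗ R ∧ R ∘ₗ A.f i = B.f i ∘ₗ R ∧
    R ∘ₗ A.k i = B.k i ∘ₗ R ∧ R ∘ₗ A.kinv i = B.kinv i ∘ₗ R

/-- E_i on V_{l,x} ⊗ V_{m,y}. -/
def tE (n : ℕ) [NeZero n] (l m : ℕ) (x y : F) (i : Zn n) :
    V n l ⊗[F] V n m →ₗ[F] V n l ⊗[F] V n m := (tensorOps (VOps n l x) (VOps n m y)).e i

/-- F_i on V_{l,x} ⊗ V_{m,y}. -/
def tF (n : ℕ) [NeZero n] (l m : ℕ) (x y : F) (i : Zn n) :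
    V n l ⊗[F] V n m →ₗ[F] V n l ⊗[F] V n m := (tensorOps (VOps n l x) (VOps n m y)).f i

/-- K_i on V_{l,x} ⊗ V_{m,y}. -/
def tK (n : ℕ) [NeZero n] (l m : ℕ) (x y : F) (i : Zn n) :
    V n l ⊗[F] V n m →ₗ[F] V n l ⊗[F] V n m := (tensorOps (VOps n l x) (VOps n m y)).k i

/-- K_i⁻¹ on V_{l,x} ⊗ V_{m,y}. -/
def tKInv (n : ℕ) [NeZero n] (l m : ℕ) (x y : F) (i : Zn n) :
    V n l ⊗[F] V n m →ₗ[F] V n l ⊗[F] V n m := (tensorOps (VOps n l x) (VOps n m y)).kinv i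

/-- B_i on V_{l,x} ⊗ V_{m,y}. -/
def tB (n : ℕ) [NeZero n] (l m : ℕ) (x y : F) (γ : Zn n → F) (i : Zn n) :
    V n l ⊗[F] V n m →ₗ[F] V n l ⊗[F] V n m :=
  bOf n (fun j => tE n l m x y j) (fun j => tF n l m x y j) (fun j => tKInv n l m x y j) γ i

/-- The entry permutation σ^{(ε)}: switches α_{i-1} and α_i whenever i ≡ ε (mod 2),
i.e. pairs {ε+2k-1, ε+2k}. -/
def sigmaPerm (n : ℕ) [NeZero n] (ε : ℕ) (j : Zn n) : Zn n :=
  if (j - (ε : Zn n)).val % 2 = 1 then j + 1 else j - 1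

/-- Action of σ^{(ε)} on entry vectors. -/
def sigmaAct (n : ℕ) [NeZero n] (ε : ℕ) (α : Zn n → ℤ) : Zn n → ℤ :=
  fun j => α (sigmaPerm n ε j)

/-- The coefficient of the K matrix:
x^{ε(α_1-α_{2n})} ∏_{j=ε,ε+2,…,ε+2n-2} (-q⁻¹γ_j)^{-∑_{i=ε+1}^{j} α_i}. -/
def Kcoef (n : ℕ) [NeZero n] (x : F) (γ : Zn n → F) (ε : ℕ) (α : Zn n → ℤ) : F :=
  x ^ ((ε : ℤ) * (α 1 - α 0)) *
    ∏ k ∈ Finset.range n,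
      (-qq⁻¹ * γ ((ε : Zn n) + 2 * (k : Zn n))) ^
        (-(∑ r ∈ Finset.range (2 * k), α ((ε : Zn n) + 1 + (r : Zn n))))

/-- The explicit K matrix K(x) : V_{l,x} → V^*_{l,x⁻¹},
v_α ↦ Kcoef(α) v^*_{σ^{(ε)}(α)}. -/
def Kmap (n : ℕ) [NeZero n] (l : ℕ) (x : F) (γ : Zn n → F) (ε : ℕ) :
    V n l →ₗ[F] V n l :=
  opOf n l (fun α => Kcoef n x γ ε α) (sigmaAct n ε)

/-- The simplified K matrix (for γ_j = -q): v_α ↦ x^{ε(α_1-α_{2n})} v^*_{σ^{(ε)}(α)}. -/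
def KmapS (n : ℕ) [NeZero n] (l : ℕ) (x : F) (ε : ℕ) : V n l →ₗ[F] V n l :=
  opOf n l (fun α => x ^ ((ε : ℤ) * (α 1 - α 0))) (sigmaAct n ε)

/-- Cartan matrix of A^{(1)}_{2n-1}: a_{ij} = 2δ_{ij} - δ_{i,j+1} - δ_{i,j-1}. -/
def cartan (n : ℕ) [NeZero n] (i j : Zn n) : ℤ :=
  (if i = j then 2 else 0) - (if i = j + 1 then 1 else 0) - (if i = j - 1 then 1 else 0)

/- ### sl2 representations U_l -/

/-- The (l+1)-dimensional irreducible U_q(sl_2)-module U_l. -/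
abbrev UL (l : ℕ) := {p : ℕ × ℕ // p.1 + p.2 = l} →₀ F

/-- Basis vector u_{(a,b)} of U_l, zero when out of range. -/
def uB (l : ℕ) (a b : ℤ) : UL l :=
  if h : 0 ≤ a ∧ 0 ≤ b ∧ a.toNat + b.toNat = l then Finsupp.single ⟨(a.toNat, b.toNat), h.2.2⟩ 1
  else 0

/-- Helper for sl2 operators. -/
def slOf (l : ℕ) (c : ℕ × ℕ → F) (sh : ℕ × ℕ → ℤ × ℤ) : UL l →ₗ[F] UL l :=
  Finsupp.lsum F fun a => LinearMap.toSpanSingleton F (UL l) (c a.1 • uB l (sh a.1).1 (sh a.1).2)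

/-- e on U_l : u_{(a,b)} ↦ [b]u_{(a+1,b-1)}. -/
def esl (l : ℕ) : UL l →ₗ[F] UL l :=
  slOf l (fun p => qint p.2) (fun p => ((p.1 : ℤ) + 1, (p.2 : ℤ) - 1))

/-- f on U_l : u_{(a,b)} ↦ [a]u_{(a-1,b+1)}. -/
def fsl (l : ℕ) : UL l →ₗ[F] UL l :=
  slOf l (fun p => qint p.1) (fun p => ((p.1 : ℤ) - 1, (p.2 : ℤ) + 1))

/-- k on U_l. -/
def ksl (l : ℕ) : UL l →ₗ[F] UL l :=
  slOf l (fun p => qq ^ ((p.1 : ℤ) - (p.2 : ℤ))) (fun p => ((p.1 : ℤ), (p.2 : ℤ)))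

/-- k⁻¹ on U_l. -/
def kslInv (l : ℕ) : UL l →ₗ[F] UL l :=
  slOf l (fun p => qq ^ (-((p.1 : ℤ) - (p.2 : ℤ)))) (fun p => ((p.1 : ℤ), (p.2 : ℤ)))

/-- The highest weight vector w^{(l,m)}_j of U_{l+m-2j} ⊂ U_l ⊗ U_m. -/
def wsl (l m j : ℕ) : UL l ⊗[F] UL m :=
  ∑ p ∈ Finset.range (j + 1),
    ((-1 : F) ^ p * qq ^ ((p : ℤ) * ((l : ℤ) - p + 1)) * qbinom j p) •
      (uB l ((l : ℤ) - p) p ⊗ₜ[F] uB m ((m : ℤ) - j + p) ((j : ℤ) - p))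

/- ### The U(I_•)-highest weight vectors of V_l ⊗ V_m -/

/-- The index t ∈ {1,…,n} (0-based, in Fin n) of the sl2-pair containing
the entry position i : the pairs are {2t-1, 2t}. -/
def pairIdx (n : ℕ) [NeZero n] (i : Zn n) : Fin n :=
  if i.val % 2 = 1 then Fin.ofNat n (i.val / 2 : ℕ) else Fin.ofNat n ((i.val + 2 * n - 2) / 2 : ℕ)

/-- The entry vector α with α_{2t-1} = l_t - p_t, α_{2t} = p_t. -/
def alphaOf (n : ℕ) [NeZero n] (bl : Fin n → ℤ) (p : Fin n → ℕ) : Zn n → ℤ :=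
  fun i => if i.val % 2 = 1 then bl (pairIdx n i) - p (pairIdx n i) else (p (pairIdx n i) : ℤ)

/-- The entry vector β with β_{2t-1} = m_t - j_t + p_t, β_{2t} = j_t - p_t. -/
def betaOf (n : ℕ) [NeZero n] (bm bj : Fin n → ℤ) (p : Fin n → ℕ) : Zn n → ℤ :=
  fun i => if i.val % 2 = 1 then bm (pairIdx n i) - bj (pairIdx n i) + p (pairIdx n i)
    else bj (pairIdx n i) - p (pairIdx n i)

/-- Admissibility of a triple (𝒍, 𝒎, 𝒋). -/
def adm (n : ℕ) [NeZero n] (l m : ℕ) (bl bm bj : Fin n → ℤ) : Prop :=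
  (∀ t, 0 ≤ bl t) ∧ (∀ t, 0 ≤ bm t) ∧ (∑ t, bl t) = (l : ℤ) ∧ (∑ t, bm t) = (m : ℤ) ∧
    (∀ t, 0 ≤ bj t ∧ bj t ≤ min (bl t) (bm t))

/-- The U(I_•)-highest weight vector 𝒘^{(𝒍,𝒎)}_𝒋 ∈ V_{l,1} ⊗ V_{m,1},
zero when the triple is not admissible. -/
def wbig (n : ℕ) [NeZero n] (l m : ℕ) (bl bm bj : Fin n → ℤ) : V n l ⊗[F] V n m :=
  if adm n l m bl bm bj then
    ∑ p ∈ Fintype.piFinset (fun t => Finset.range ((bj t).toNat + 1)),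
      (∏ t, ((-1 : F) ^ (p t) * qq ^ ((p t : ℤ) * (bl t - p t + 1)) * qbinom (bj t).toNat (p t))) •
        (vB n l (alphaOf n bl p) ⊗ₜ[F] vB n m (betaOf n bm bj p))
  else (0 : V n l ⊗[F] V n m)

/-- The s-th standard unit vector of ℤ^n. -/
def eun (n : ℕ) [NeZero n] (s : Fin n) : Fin n → ℤ := fun t => if t = s then 1 else 0

/-- The Dynkin index i = 2s ∈ ℤ/2n attached to s ∈ {1,…,n} (s 0-based in Fin n). -/
def iZ (n : ℕ) [NeZero n] (s : Fin n) : Zn n := ((2 * s.val + 2 : ℕ) : Zn n)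

/- ### Coefficients from Propositions 4.3–4.5 -/


def cD1 (n : ℕ) [NeZero n] (bl bm bj : Fin n → ℤ) (s : Fin n) : F := -(qq ^ (-(bj s) - bj (s+1) + bl s + bm (s+1) + 1) * qint (bj s))
def cD2 (n : ℕ) [NeZero n] (bl bm bj : Fin n → ℤ) (s : Fin n) : F := qint (bj s)
def cD3 (n : ℕ) [NeZero n] (bl bm bj : Fin n → ℤ) (s : Fin n) : F := -(qq ^ (-(bj s) - bj (s+1) + bl (s+1) + bm (s+1) + 1) * qint (bj (s+1)))
def cD4 (n : ℕ) [NeZero n] (bl bm bj : Fin n → ℤ) (s : Fin n) : F := qq ^ (-2 * bj s - 2 * bj (s+1) + bl s + bl (s+1) + 2 * bm (s+1) + 2) * qint (bj (s+1))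

def cB1 (n : ℕ) [NeZero n] (bl bm bj : Fin n → ℤ) (s : Fin n) : F := qq ^ (bj s - bj (s+1) - bm s + bm (s+1)) * qint (bl s - bj s)
def cB2 (n : ℕ) [NeZero n] (bl bm bj : Fin n → ℤ) (s : Fin n) : F := qint (bm s - bj s)
def cB3 (n : ℕ) [NeZero n] (bl bm bj : Fin n → ℤ) (s : Fin n) : F := -(qq ^ (bj s - bj (s+1) - bl s - bm s + bl (s+1) + bm (s+1)) * qint (bm s - bj s))
def cB4 (n : ℕ) [NeZero n] (bl bm bj : Fin n → ℤ) (s : Fin n) : F := -(qq ^ (2 * bj s - 2 * bj (s+1) - bl s - 2 * bm s + bl (s+1) + 2 * bm (s+1)) * qint (bl s - bj s))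

def cC1 (n : ℕ) [NeZero n] (bl bm bj : Fin n → ℤ) (s : Fin n) : F := -(qq ^ (-(bj s) + bj (s+1) + bl s - bl (s+1)) * qint (bm (s+1) - bj (s+1)))
def cC2 (n : ℕ) [NeZero n] (bl bm bj : Fin n → ℤ) (s : Fin n) : F := -qint (bl (s+1) - bj (s+1))
def cC3 (n : ℕ) [NeZero n] (bl bm bj : Fin n → ℤ) (s : Fin n) : F := qq ^ (-(bj s) + bj (s+1)) * qint (bl (s+1) - bj (s+1))
def cC4 (n : ℕ) [NeZero n] (bl bm bj : Fin n → ℤ) (s : Fin n) : F := qq ^ (-2 * bj s + 2 * bj (s+1) + bl s - bl (s+1)) * qint (bm (s+1) - bj (s+1))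

/-- The denominator N = [l_s+m_s-2j_s+1][l_{s+1}+m_{s+1}-2j_{s+1}+1]. -/
def cN (n : ℕ) [NeZero n] (bl bm bj : Fin n → ℤ) (s : Fin n) : F := qint (bl s + bm s - 2 * bj s + 1) * qint (bl (s+1) + bm (s+1) - 2 * bj (s+1) + 1)


/-- A_1 as a function of the six integers l_s, l_{s+1}, m_s, m_{s+1}, j_s, j_{s+1}. -/
def sA1 (ls ls1 ms ms1 js js1 : ℤ) : F :=
  qq ^ (js + js1 - ls1 - ms - 1) * qint (ls - js) * qint (ms1 - js1) * qint (ls + ms - js + 1)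
    / (qint (ls + ms - 2 * js + 1) * qint (ls1 + ms1 - 2 * js1 + 1))

def sA2 (ls ls1 ms ms1 js js1 : ℤ) : F :=
  -(qint (ls1 - js1) * qint (ms - js) * qint (ls + ms - js + 1))
    / (qint (ls + ms - 2 * js + 1) * qint (ls1 + ms1 - 2 * js1 + 1))

def sA3 (ls ls1 ms ms1 js js1 : ℤ) : F :=
  qq ^ (js + js1 - ls - ms - 1) * qint (ls1 - js1) * qint (ms - js) * qint (ls1 + ms1 - js1 + 1)
    / (qint (ls + ms - 2 * js + 1) * qint (ls1 + ms1 - 2 * js1 + 1))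

def sA4 (ls ls1 ms ms1 js js1 : ℤ) : F :=
  -(qq ^ (2 * js + 2 * js1 - ls - ls1 - 2 * ms - 2) * qint (ls - js) * qint (ms1 - js1)
      * qint (ls1 + ms1 - js1 + 1))
    / (qint (ls + ms - 2 * js + 1) * qint (ls1 + ms1 - 2 * js1 + 1))


def cA1 (n : ℕ) [NeZero n] (bl bm bj : Fin n → ℤ) (s : Fin n) : F := sA1 (bl s) (bl (s+1)) (bm s) (bm (s+1)) (bj s) (bj (s+1))
def cA2 (n : ℕ) [NeZero n] (bl bm bj : Fin n → ℤ) (s : Fin n) : F := sA2 (bl s) (bl (s+1)) (bm s) (bm (s+1)) (bj s) (bj (s+1))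
def cA3 (n : ℕ) [NeZero n] (bl bm bj : Fin n → ℤ) (s : Fin n) : F := sA3 (bl s) (bl (s+1)) (bm s) (bm (s+1)) (bj s) (bj (s+1))
def cA4 (n : ℕ) [NeZero n] (bl bm bj : Fin n → ℤ) (s : Fin n) : F := sA4 (bl s) (bl (s+1)) (bm s) (bm (s+1)) (bj s) (bj (s+1))

def cBB1 (n : ℕ) [NeZero n] (bl bm bj : Fin n → ℤ) (s : Fin n) : F := cB1 n bl bm bj s * qint (bl s + bm s - bj s + 1)
  * qint (bl (s+1) + bm (s+1) - 2 * bj (s+1)) / cN n bl bm bj s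
def cBB2 (n : ℕ) [NeZero n] (bl bm bj : Fin n → ℤ) (s : Fin n) : F := cB2 n bl bm bj s * qint (bl s + bm s - bj s + 1)
  * qint (bl (s+1) + bm (s+1) - 2 * bj (s+1)) / cN n bl bm bj s
def cBB3 (n : ℕ) [NeZero n] (bl bm bj : Fin n → ℤ) (s : Fin n) : F := cB3 n bl bm bj s * qint (bj (s+1))
  * qint (bl (s+1) + bm (s+1) - 2 * bj (s+1)) / cN n bl bm bj s
def cBB4 (n : ℕ) [NeZero n] (bl bm bj : Fin n → ℤ) (s : Fin n) : F := cB4 n bl bm bj s * qint (bj (s+1))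
  * qint (bl (s+1) + bm (s+1) - 2 * bj (s+1)) / cN n bl bm bj s

def cCC1 (n : ℕ) [NeZero n] (bl bm bj : Fin n → ℤ) (s : Fin n) : F := cC1 n bl bm bj s * qint (bj s) * qint (bl s + bm s - 2 * bj s) / cN n bl bm bj s
def cCC2 (n : ℕ) [NeZero n] (bl bm bj : Fin n → ℤ) (s : Fin n) : F := cC2 n bl bm bj s * qint (bj s) * qint (bl s + bm s - 2 * bj s) / cN n bl bm bj s
def cCC3 (n : ℕ) [NeZero n] (bl bm bj : Fin n → ℤ) (s : Fin n) : F := cC3 n bl bm bj s * qint (bl s + bm s - 2 * bj s)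
  * qint (bl (s+1) + bm (s+1) - bj (s+1) + 1) / cN n bl bm bj s
def cCC4 (n : ℕ) [NeZero n] (bl bm bj : Fin n → ℤ) (s : Fin n) : F := cC4 n bl bm bj s * qint (bl s + bm s - 2 * bj s)
  * qint (bl (s+1) + bm (s+1) - bj (s+1) + 1) / cN n bl bm bj s

def cDD1 (n : ℕ) [NeZero n] (bl bm bj : Fin n → ℤ) (s : Fin n) : F := cD1 n bl bm bj s * qint (bl s + bm s - 2 * bj s)
  * qint (bl (s+1) + bm (s+1) - 2 * bj (s+1)) / cN n bl bm bj s
def cDD2 (n : ℕ) [NeZero n] (bl bm bj : Fin n → ℤ) (s : Fin n) : F := cD2 n bl bm bj s * qint (bl s + bm s - 2 * bj s)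
  * qint (bl (s+1) + bm (s+1) - 2 * bj (s+1)) / cN n bl bm bj s
def cDD3 (n : ℕ) [NeZero n] (bl bm bj : Fin n → ℤ) (s : Fin n) : F := cD3 n bl bm bj s * qint (bl s + bm s - 2 * bj s)
  * qint (bl (s+1) + bm (s+1) - 2 * bj (s+1)) / cN n bl bm bj s
def cDD4 (n : ℕ) [NeZero n] (bl bm bj : Fin n → ℤ) (s : Fin n) : F := cD4 n bl bm bj s * qint (bl s + bm s - 2 * bj s)
  * qint (bl (s+1) + bm (s+1) - 2 * bj (s+1)) / cN n bl bm bj s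


/-- The entry of the matrix C of Proposition 4.8, for row data (s, 𝒍, 𝒎, 𝒋)
and column data (𝒍', 𝒎', 𝒋'). -/
def Centry (n : ℕ) [NeZero n] (s : Fin n) (bl bm bj bl' bm' bj' : Fin n → ℤ) : F :=
  if bl' = bl - eun n s + eun n (s + 1) ∧ bm' = bm ∧ bj' = bj + eun n (s + 1) then
    cA1 n bl bm bj s
  else if bl' = bl ∧ bm' = bm - eun n s + eun n (s + 1) ∧ bj' = bj + eun n (s + 1) then
    cA2 n bl bm bj s
  else if bl' = bl + eun n s - eun n (s + 1) ∧ bm' = bm ∧ bj' = bj + eun n s then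
    cA3 n bl bm bj s
  else if bl' = bl ∧ bm' = bm + eun n s - eun n (s + 1) ∧ bj' = bj + eun n s then
    cA4 n bl bm bj s
  else 0

/-- f ∈ ℚ(q) is regular at q = 0 and vanishes there (i.e. f ∈ qA). -/
def vanishesAt0 (f : F) : Prop :=
  ∃ a b : Polynomial ℚ, Polynomial.eval 0 b ≠ 0 ∧ Polynomial.eval 0 a = 0 ∧
    f = algebraMap (Polynomial ℚ) F a / algebraMap (Polynomial ℚ) F b


/-!
Writing `[m] = q^(1-m) (1 + q^2 + ⋯ + q^(2m-2))` for `m ≥ 0`, every factor of `A_t` is a power of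
`q` times a rational function that is a unit of `A` (or zero). So `A_t ∈ q^(k_t) A` and
`A_4⁻¹ ∈ q^(-k_4) A` for explicit exponents, and the hypotheses make `k_t - k_4` positive.
-/

open Polynomial

lemma qq_ne_zero : qq ≠ 0 := RatFunc.X_ne_zero

lemma algebraMap_X_eq_qq : algebraMap ℚ[X] F X = qq := RatFunc.algebraMap_X

/-- `f ∈ q^k A`, where `A` is the ring of rational functions regular at `q = 0`. -/
def MemQPow (k : ℤ) (f : F) : Prop :=
  ∃ u v : ℚ[X], v.eval 0 ≠ 0 ∧ f = qq ^ k * (algebraMap ℚ[X] F u / algebraMap ℚ[X] F v)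

namespace MemQPow

lemma mul {k l : ℤ} {f g : F} (hf : MemQPow k f) (hg : MemQPow l g) :
    MemQPow (k + l) (f * g) := by
  obtain ⟨u, v, hv, rfl⟩ := hf
  obtain ⟨u', v', hv', rfl⟩ := hg
  refine ⟨u * u', v * v', by simp [hv, hv'], ?_⟩
  rw [zpow_add₀ qq_ne_zero, map_mul, map_mul]
  ring

lemma neg {k : ℤ} {f : F} (hf : MemQPow k f) : MemQPow k (-f) := by
  obtain ⟨u, v, hv, rfl⟩ := hf
  exact ⟨-u, v, hv, by rw [map_neg]; ring⟩

lemma mono {k l : ℤ} {f : F} (hf : MemQPow k f) (hlk : l ≤ k) : MemQPow l f := by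
  obtain ⟨u, v, hv, rfl⟩ := hf
  obtain ⟨n, hn⟩ := Int.eq_ofNat_of_zero_le (sub_nonneg.2 hlk)
  refine ⟨X ^ n * u, v, hv, ?_⟩
  rw [map_mul, map_pow, algebraMap_X_eq_qq, ← zpow_natCast, ← hn, mul_div_assoc, ← mul_assoc,
    ← zpow_add₀ qq_ne_zero, add_sub_cancel]

lemma vanishesAt0 {k : ℤ} {f : F} (hf : MemQPow k f) (hk : 0 < k) : vanishesAt0 f := by
  obtain ⟨u, v, hv, rfl⟩ := hf.mono (l := 1) hk
  refine ⟨X * u, v, hv, by simp, ?_⟩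
  rw [map_mul, algebraMap_X_eq_qq, zpow_one, mul_div_assoc]

end MemQPow

lemma memQPow_zero (k : ℤ) : MemQPow k 0 :=
  ⟨0, 1, by simp, by simp⟩

lemma memQPow_zpow (k : ℤ) : MemQPow k (qq ^ k) :=
  ⟨1, 1, by simp, by simp⟩

lemma eval_zero_geom_sum_X_sq {m : ℕ} (hm : 0 < m) :
    (∑ i ∈ range m, (X ^ 2 : ℚ[X]) ^ i).eval 0 = 1 := by
  obtain ⟨n, rfl⟩ := Nat.exists_eq_add_of_lt hm
  simp [eval_finsetSum, Finset.sum_range_succ']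

lemma qq_sub_inv_ne_zero : qq - qq⁻¹ ≠ 0 := by
  intro h
  have hX : algebraMap ℚ[X] F (X ^ 2) = algebraMap ℚ[X] F 1 := by
    rw [map_pow, map_one, algebraMap_X_eq_qq, sq]
    nth_rewrite 1 [sub_eq_zero.1 h]
    exact inv_mul_cancel₀ qq_ne_zero
  simpa using congrArg (eval 0) (RatFunc.algebraMap_injective ℚ hX)

lemma qint_natCast (m : ℕ) :
    qint m = qq ^ (1 - (m : ℤ)) * algebraMap ℚ[X] F (∑ i ∈ range m, (X ^ 2) ^ i) := by
  have hgeom :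
      algebraMap ℚ[X] F (∑ i ∈ range m, (X ^ 2) ^ i) * (qq ^ 2 - 1) = qq ^ (2 * m) - 1 := by
    rw [← algebraMap_X_eq_qq, ← map_pow, ← map_pow, ← map_one (algebraMap ℚ[X] F), ← map_sub,
      ← map_sub, ← map_mul, geom_sum_mul, pow_mul]
  rw [qint, eq_comm, eq_div_iff qq_sub_inv_ne_zero, zpow_sub₀ qq_ne_zero, zpow_one, zpow_neg,
    zpow_natCast]
  field_simp [qq_ne_zero]
  linear_combination hgeom

lemma memQPow_qint {m : ℤ} (hm : 0 ≤ m) : MemQPow (1 - m) (qint m) := by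
  lift m to ℕ using hm
  exact ⟨∑ i ∈ range m, (X ^ 2) ^ i, 1, by simp, by rw [qint_natCast, map_one, div_one]⟩

lemma memQPow_qint_inv {m : ℤ} (hm : 0 ≤ m) : MemQPow (m - 1) (qint m)⁻¹ := by
  lift m to ℕ using hm
  rcases Nat.eq_zero_or_pos m with rfl | hm
  · -- `qint 0 = 0`, and `0⁻¹ = 0`
    simpa [qint] using memQPow_zero _
  refine ⟨1, _, by rw [eval_zero_geom_sum_X_sq hm]; exact one_ne_zero, ?_⟩
  rw [qint_natCast, mul_inv, ← zpow_neg, map_one, one_div, neg_sub]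

lemma qint_neg (m : ℤ) : qint (-m) = -qint m := by
  rw [qint, qint, neg_neg, ← neg_sub, neg_div]

lemma qint_ne_zero {m : ℤ} (hm : m ≠ 0) : qint m ≠ 0 := by
  wlog hpos : 0 < m generalizing m
  · rw [← neg_neg m, qint_neg, neg_ne_zero]
    exact this (neg_ne_zero.2 hm) (by omega)
  lift m to ℕ using hpos.le
  have hS : (∑ i ∈ range m, (X ^ 2 : ℚ[X]) ^ i) ≠ 0 := by
    intro h
    simpa [h] using eval_zero_geom_sum_X_sq (m := m) (by omega)
  rw [qint_natCast]
  exact mul_ne_zero (zpow_ne_zero _ qq_ne_zero) (RatFunc.algebraMap_ne_zero hS)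

section

variable {ls ls1 ms ms1 js js1 : ℤ}

lemma sA4_ne_zero (hl : ls - js ≠ 0) (hm : ms1 - js1 ≠ 0) (hlm : ls1 + ms1 - js1 + 1 ≠ 0)
    (hN : ls + ms - 2 * js + 1 ≠ 0) (hN' : ls1 + ms1 - 2 * js1 + 1 ≠ 0) :
    sA4 ls ls1 ms ms1 js js1 ≠ 0 :=
  div_ne_zero (neg_ne_zero.2 (mul_ne_zero (mul_ne_zero (mul_ne_zero
    (zpow_ne_zero _ qq_ne_zero) (qint_ne_zero hl)) (qint_ne_zero hm)) (qint_ne_zero hlm)))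
    (mul_ne_zero (qint_ne_zero hN) (qint_ne_zero hN'))

lemma memQPow_inv_sA4 (hl : 0 ≤ ls - js) (hm : 0 ≤ ms1 - js1) (hlm : 0 ≤ ls1 + ms1 - js1 + 1)
    (hN : 0 ≤ ls + ms - 2 * js + 1) (hN' : 0 ≤ ls1 + ms1 - 2 * js1 + 1) :
    MemQPow (ls + ls1 + ms + ms1 - js - 2 * js1) (sA4 ls ls1 ms ms1 js js1)⁻¹ := by
  rw [sA4, inv_div, div_eq_mul_inv, inv_neg, mul_neg]
  simp only [mul_inv, ← zpow_neg]
  refine (((memQPow_qint hN).mul (memQPow_qint hN')).mul (((((memQPow_zpow _).mul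
    (memQPow_qint_inv hl)).mul (memQPow_qint_inv hm)).mul (memQPow_qint_inv hlm)))).neg.mono ?_
  omega

lemma memQPow_sA1 (hl : 0 ≤ ls - js) (hm : 0 ≤ ms1 - js1) (hlm : 0 ≤ ls + ms - js + 1)
    (hN : 0 ≤ ls + ms - 2 * js + 1) (hN' : 0 ≤ ls1 + ms1 - 2 * js1 + 1) :
    MemQPow (1 + js - ls - ms) (sA1 ls ls1 ms ms1 js js1) := by
  rw [sA1, div_eq_mul_inv, mul_inv]
  refine (((((memQPow_zpow _).mul (memQPow_qint hl)).mul (memQPow_qint hm)).mul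
    (memQPow_qint hlm)).mul ((memQPow_qint_inv hN).mul (memQPow_qint_inv hN'))).mono ?_
  omega

lemma memQPow_sA2 (hl : 0 ≤ ls1 - js1) (hm : 0 ≤ ms - js) (hlm : 0 ≤ ls + ms - js + 1)
    (hN : 0 ≤ ls + ms - 2 * js + 1) (hN' : 0 ≤ ls1 + ms1 - 2 * js1 + 1) :
    MemQPow (2 + ms1 - ms - js1) (sA2 ls ls1 ms ms1 js js1) := by
  rw [sA2, div_eq_mul_inv, mul_inv]
  refine ((((memQPow_qint hl).mul (memQPow_qint hm)).mul (memQPow_qint hlm)).neg.mul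
    ((memQPow_qint_inv hN).mul (memQPow_qint_inv hN'))).mono ?_
  omega

lemma memQPow_sA3 (hl : 0 ≤ ls1 - js1) (hm : 0 ≤ ms - js) (hlm : 0 ≤ ls1 + ms1 - js1 + 1)
    (hN : 0 ≤ ls + ms - 2 * js + 1) (hN' : 0 ≤ ls1 + ms1 - 2 * js1 + 1) :
    MemQPow (1 + js1 - ls1 - ms) (sA3 ls ls1 ms ms1 js js1) := by
  rw [sA3, div_eq_mul_inv, mul_inv]
  refine (((((memQPow_zpow _).mul (memQPow_qint hl)).mul (memQPow_qint hm)).mul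
    (memQPow_qint hlm)).mul ((memQPow_qint_inv hN).mul (memQPow_qint_inv hN'))).mono ?_
  omega

end

/-- Under 0 ≤ j_t ≤ min(l_t,m_t) (t = s, s+1), j_s < l_s and
j_{s+1} < m_{s+1}, one has A_4 ≠ 0 and A_t/A_4 ∈ qA for t = 1,2,3, where A is the
ring of rational functions regular at q = 0. -/
theorem statement18 (ls ls1 ms ms1 js js1 : ℕ)
    (h1 : js ≤ min ls ms) (h2 : js1 ≤ min ls1 ms1) (h3 : js < ls) (h4 : js1 < ms1) :
    sA4 ls ls1 ms ms1 js js1 ≠ 0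
  ∧ vanishesAt0 (sA1 ls ls1 ms ms1 js js1 / sA4 ls ls1 ms ms1 js js1)
  ∧ vanishesAt0 (sA2 ls ls1 ms ms1 js js1 / sA4 ls ls1 ms ms1 js js1)
  ∧ vanishesAt0 (sA3 ls ls1 ms ms1 js js1 / sA4 ls ls1 ms ms1 js js1) := by
  have hA4 : MemQPow _ (sA4 ls ls1 ms ms1 js js1)⁻¹ :=
    memQPow_inv_sA4 (by omega) (by omega) (by omega) (by omega) (by omega)
  refine ⟨sA4_ne_zero (by omega) (by omega) (by omega) (by omega) (by omega), ?_, ?_, ?_⟩ <;>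
    rw [div_eq_mul_inv]
  · exact ((memQPow_sA1 (by omega) (by omega) (by omega) (by omega) (by omega)).mul
      hA4).vanishesAt0 (by omega)
  · exact ((memQPow_sA2 (by omega) (by omega) (by omega) (by omega) (by omega)).mul
      hA4).vanishesAt0 (by omega)
  · exact ((memQPow_sA3 (by omega) (by omega) (by omega) (by omega) (by omega)).mul
      hA4).vanishesAt0 (by omega)

end AII
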